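/- arXiv:2007.03954 — 3 statements merged into one kernel-verified Lean document; each statement's English description precedes it below -/
import Mathlib

section
/- Let T ≥ 2, p > 1, α ∈ (0,1), k ∈ ℕ, σ > (k+α)p/(p-1), and set w(t) := (1 - t/T)^σ. Then there is a constant C > 0 independent of T such that ∫_0^T (1+t) · w(t)^{-1/(p-1)} · |(Γ(σ+1)/Γ(σ+1-k-α)) T^{-(k+α)} (1-t/T)^{σ-(k+α)}|^{p/(p-1)} dt ≤ C · T^{2 - (k+α)p/(p-1)}. -/
open MeasureTheory intervalIntegral

/-- First integral estimate of Lemma 3.3: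
`∫_0^T (1+t) w(t)^{-1/(p-1)} |D_{t|T}^{k+α} w(t)|^{p/(p-1)} dt ≲ T^{2-(k+α)p/(p-1)}`,
where `w(t) = (1-t/T)^σ` and `D_{t|T}^{k+α} w(t)` is given by the explicit power formula. -/
theorem frac_integral_estimate_one (p σ α : ℝ) (k : ℕ) (hp : 1 < p)
    (hα : α ∈ Set.Ioo (0:ℝ) 1) (hσ : ((k : ℝ) + α) * p / (p - 1) < σ) :
    ∃ C : ℝ, 0 < C ∧ ∀ T : ℝ, 2 ≤ T →
      (∫ t in (0:ℝ)..T, (1 + t) * (((1 - t / T) ^ σ) ^ (-(1 / (p - 1)))) *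
        |(Real.Gamma (σ + 1) / Real.Gamma (σ + 1 - k - α)) * T ^ (-((k : ℝ) + α)) *
          (1 - t / T) ^ (σ - ((k : ℝ) + α))| ^ (p / (p - 1)))
      ≤ C * T ^ (2 - ((k : ℝ) + α) * p / (p - 1)) := by
  obtain ⟨hα0, hα1⟩ := hα
  have hp1 : (0:ℝ) < p - 1 := by linarith
  set q : ℝ := p / (p - 1) with hqdef
  have hq1 : 1 < q := (one_lt_div hp1).2 (by linarith)
  have hq0 : 0 < q := by linarith
  have hka : 0 < (k:ℝ) + α := by positivity
  have hkaq : ((k:ℝ) + α) * p / (p - 1) = ((k:ℝ) + α) * q := by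
    rw [hqdef, mul_div_assoc]
  have hσ' : ((k:ℝ) + α) * q < σ := by rw [← hkaq]; exact hσ
  have hσ0 : 0 < σ := lt_trans (by positivity) hσ'
  have hka_lt : (k:ℝ) + α < σ := by nlinarith [mul_lt_mul_of_pos_left hq1 hka]
  set β : ℝ := σ - ((k:ℝ) + α) * q with hβdef
  have hβ : 0 < β := by simp only [hβdef]; linarith
  set G : ℝ := Real.Gamma (σ + 1) / Real.Gamma (σ + 1 - k - α) with hGdef
  have hG : 0 < G := by
    apply div_pos
    · exact Real.Gamma_pos_of_pos (by linarith)
    · exact Real.Gamma_pos_of_pos (by linarith)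
  refine ⟨G ^ q, Real.rpow_pos_of_pos hG q, fun T hT => ?_⟩
  have hT0 : (0:ℝ) < T := by linarith
  set c : ℝ := -(1 / (p - 1)) with hcdef
  -- pointwise identity
  have key : Set.EqOn
      (fun t => (1 + t) * (((1 - t / T) ^ σ) ^ c) *
        |G * T ^ (-((k : ℝ) + α)) * (1 - t / T) ^ (σ - ((k : ℝ) + α))| ^ q)
      (fun t => G ^ q * T ^ (-(((k:ℝ) + α) * q)) * ((1 + t) * (1 - t / T) ^ β))
      (Set.uIcc 0 T) := by
    intro t ht
    rw [Set.uIcc_of_le hT0.le] at ht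
    obtain ⟨ht0, htT⟩ := ht
    set A : ℝ := 1 - t / T with hAdef
    have hA0 : 0 ≤ A := by
      have : t / T ≤ 1 := (div_le_one hT0).2 htT
      simp only [hAdef]; linarith
    have hTpow : (0:ℝ) < T ^ (-((k:ℝ) + α)) := Real.rpow_pos_of_pos hT0 _
    have hApow : (0:ℝ) ≤ A ^ (σ - ((k:ℝ) + α)) := Real.rpow_nonneg hA0 _
    have habs : |G * T ^ (-((k : ℝ) + α)) * A ^ (σ - ((k : ℝ) + α))|
        = G * T ^ (-((k : ℝ) + α)) * A ^ (σ - ((k : ℝ) + α)) := by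
      exact abs_of_nonneg (by positivity)
    simp only
    rw [habs, Real.mul_rpow (by positivity) hApow, Real.mul_rpow hG.le hTpow.le,
      ← Real.rpow_mul hT0.le, ← Real.rpow_mul hA0, ← Real.rpow_mul hA0, neg_mul]
    have hAA : A ^ (σ * c) * A ^ ((σ - ((k:ℝ) + α)) * q) = A ^ β := by
      rcases eq_or_lt_of_le hA0 with h0 | hpos
      · have hc : c < 0 := by rw [hcdef]; rw [neg_lt_zero]; positivity
        rw [← h0, Real.zero_rpow (mul_neg_of_pos_of_neg hσ0 hc).ne, zero_mul,
          Real.zero_rpow hβ.ne']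
      · rw [← Real.rpow_add hpos]
        congr 1
        rw [hβdef, hcdef, hqdef]
        field_simp
        ring
    calc (1 + t) * A ^ (σ * c) * (G ^ q * T ^ (-(((k:ℝ) + α) * q)) * A ^ ((σ - ((k:ℝ) + α)) * q))
        = G ^ q * T ^ (-(((k:ℝ) + α) * q)) * ((1 + t) * (A ^ (σ * c) * A ^ ((σ - ((k:ℝ) + α)) * q))) := by ring
      _ = G ^ q * T ^ (-(((k:ℝ) + α) * q)) * ((1 + t) * A ^ β) := by rw [hAA]
  rw [intervalIntegral.integral_congr key]
  rw [intervalIntegral.integral_const_mul]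
  -- continuity facts
  have hcont : Continuous fun t : ℝ => (1 + t) * (1 - t / T) ^ β := by
    apply Continuous.mul (by continuity)
    exact (continuous_const.sub (continuous_id.div_const T)).rpow_const
      (fun x => Or.inr hβ.le)
  have hint1 : IntervalIntegrable (fun t : ℝ => (1 + t) * (1 - t / T) ^ β)
      volume 0 T := hcont.intervalIntegrable 0 T
  have hint2 : IntervalIntegrable (fun t : ℝ => 1 + t) volume 0 T :=
    (continuous_const.add continuous_id).intervalIntegrable 0 T
  have hmono : ∫ t in (0:ℝ)..T, (1 + t) * (1 - t / T) ^ β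
      ≤ ∫ t in (0:ℝ)..T, (1 + t) := by
    apply intervalIntegral.integral_mono_on hT0.le hint1 hint2
    intro t ht
    obtain ⟨ht0, htT⟩ := ht
    have hA0 : 0 ≤ 1 - t / T := by
      have : t / T ≤ 1 := (div_le_one hT0).2 htT
      linarith
    have hA1 : 1 - t / T ≤ 1 := by
      have : 0 ≤ t / T := by positivity
      linarith
    calc (1 + t) * (1 - t / T) ^ β ≤ (1 + t) * 1 := by
          apply mul_le_mul_of_nonneg_left _ (by linarith)
          exact Real.rpow_le_one hA0 hA1 hβ.le
      _ = 1 + t := mul_one _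
  have hval : ∫ t in (0:ℝ)..T, (1 + t) = T + T ^ 2 / 2 := by
    rw [intervalIntegral.integral_add intervalIntegrable_const
      intervalIntegral.intervalIntegrable_id]
    simp [integral_id]
  have hTsq : T + T ^ 2 / 2 ≤ T ^ 2 := by nlinarith
  have hstep : ∫ t in (0:ℝ)..T, (1 + t) * (1 - t / T) ^ β ≤ T ^ 2 :=
    le_trans hmono (by rw [hval]; exact hTsq)
  have hconst : (0:ℝ) ≤ G ^ q * T ^ (-(((k:ℝ) + α) * q)) := by positivity
  calc G ^ q * T ^ (-(((k:ℝ) + α) * q)) * ∫ t in (0:ℝ)..T, (1 + t) * (1 - t / T) ^ β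
      ≤ G ^ q * T ^ (-(((k:ℝ) + α) * q)) * T ^ 2 :=
        mul_le_mul_of_nonneg_left hstep hconst
    _ = G ^ q * T ^ (2 - ((k:ℝ) + α) * p / (p - 1)) := by
        rw [mul_assoc]
        congr 1
        rw [← Real.rpow_two, ← Real.rpow_add hT0, hkaq]
        ring_nf
end

section
/- Let T ≥ 2, p > 1, α ∈ (0,1), k ∈ ℕ, σ > (k+α)p/(p-1), and w(t) := (1 - t/T)^σ. Define D_p(T) := T^{(p-2)/(p-1)} if p > 2, D_p(T) := log T if p = 2, and D_p(T) := 1 if 1 < p < 2. Then there exists C > 0 independent of T such that ∫_0^T ((1+t) w(t))^{-1/(p-1)} |(Γ(σ+1)/Γ(σ+1-k-α)) T^{-(k+α)} (1-t/T)^{σ-(k+α)}|^{p/(p-1)} dt ≤ C · D_p(T) · T^{-(k+α)p/(p-1)}. -/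
/-!
On `0 < t < T` the powers of `1 - t/T` combine to `(1 - t/T)^(σ - (k+α)p/(p-1)) ≤ 1`, because
`-1/(p-1) + p/(p-1) = 1`; so the integrand is at most a constant times
`T^(-(k+α)p/(p-1)) (1+t)^(-1/(p-1))`. The integral of `(1+t)^(-1/(p-1))` over `[0, T]` is
`O(T^((p-2)/(p-1)))`, `O(log T)` or `O(1)` according as the exponent is above, at or below `-1`.
-/

open MeasureTheory intervalIntegral Real Set

theorem intervalIntegral.integral_mono_of_nonneg_of_le_Ioo {f g : ℝ → ℝ} {a b : ℝ} (hab : a ≤ b)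
    (hf : ∀ x ∈ Ioo a b, 0 ≤ f x) (hg : IntervalIntegrable g volume a b)
    (hfg : ∀ x ∈ Ioo a b, f x ≤ g x) :
    ∫ x in a..b, f x ≤ ∫ x in a..b, g x := by
  simp only [integral_of_le hab, integral_Ioc_eq_integral_Ioo]
  refine integral_mono_of_nonneg ?_ (hg.1.mono_set Ioo_subset_Ioc_self) ?_
  · exact (ae_restrict_iff' measurableSet_Ioo).2 (.of_forall hf)
  · exact (ae_restrict_iff' measurableSet_Ioo).2 (.of_forall hfg)

theorem integral_one_add_rpow_eq (r T : ℝ) :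
    ∫ t in (0:ℝ)..T, (1 + t) ^ r = ∫ x in (1:ℝ)..1 + T, x ^ r := by
  simpa using integral_comp_add_left (fun x : ℝ => x ^ r) (1 : ℝ) (a := 0) (b := T)

theorem intervalIntegrable_one_add_rpow (r T : ℝ) (hT : 0 ≤ T) :
    IntervalIntegrable (fun t : ℝ => (1 + t) ^ r) volume 0 T := by
  refine ContinuousOn.intervalIntegrable fun t ht => ?_
  rw [uIcc_of_le hT] at ht
  have : 1 + t ≠ 0 := by linarith [ht.1]
  exact ((continuous_const.add continuous_id).continuousAt.rpow_const (.inl this))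
    |>.continuousWithinAt

theorem integral_one_add_rpow_le_of_neg_one_lt {r : ℝ} (hr : -1 < r) (hr0 : r ≤ 0) {T : ℝ}
    (hT : 0 ≤ T) : ∫ t in (0:ℝ)..T, (1 + t) ^ r ≤ T ^ (r + 1) / (r + 1) := by
  calc ∫ t in (0:ℝ)..T, (1 + t) ^ r ≤ ∫ t in (0:ℝ)..T, t ^ r :=
        integral_mono_of_nonneg_of_le_Ioo hT (fun t ht => by have := ht.1; positivity)
          (intervalIntegrable_rpow' hr) fun t ht => rpow_le_rpow_of_nonpos ht.1 (by linarith) hr0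
    _ = T ^ (r + 1) / (r + 1) := by
        rw [integral_rpow (.inl hr), zero_rpow (by linarith), sub_zero]

theorem integral_one_add_rpow_le_of_lt_neg_one {r : ℝ} (hr : r < -1) {T : ℝ} (hT : 0 ≤ T) :
    ∫ t in (0:ℝ)..T, (1 + t) ^ r ≤ -1 / (r + 1) := by
  have h0 : (0:ℝ) ∉ uIcc 1 (1 + T) := by
    rw [uIcc_of_le (by linarith)]; exact fun h => by linarith [h.1]
  rw [integral_one_add_rpow_eq, integral_rpow (.inr ⟨hr.ne, h0⟩), one_rpow, sub_div, neg_div]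
  have : (1 + T) ^ (r + 1) / (r + 1) ≤ 0 :=
    div_nonpos_of_nonneg_of_nonpos (by positivity) (by linarith)
  linarith

theorem integral_one_add_inv_le_two_mul_log {T : ℝ} (hT : 2 ≤ T) :
    ∫ t in (0:ℝ)..T, (1 + t) ^ (-1 : ℝ) ≤ 2 * log T := by
  rw [integral_one_add_rpow_eq]
  simp only [rpow_neg_one]
  rw [integral_inv_of_pos one_pos (by linarith), div_one, two_mul,
    ← log_mul (by linarith) (by linarith)]
  exact log_le_log (by linarith) (by nlinarith)

/-- The factor `𝒟_p(T)` of the estimate. -/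
noncomputable def growthRate (p T : ℝ) : ℝ :=
  if 2 < p then T ^ ((p - 2) / (p - 1)) else if p = 2 then log T else 1

theorem growthRate_nonneg (p : ℝ) {T : ℝ} (hT : 1 ≤ T) : 0 ≤ growthRate p T := by
  unfold growthRate
  split_ifs
  · positivity
  · exact log_nonneg hT
  · exact zero_le_one

theorem exists_integral_one_add_rpow_le_growthRate {p : ℝ} (hp : 1 < p) :
    ∃ K > 0, ∀ T, 2 ≤ T → ∫ t in (0:ℝ)..T, (1 + t) ^ (-(1 / (p - 1))) ≤ K * growthRate p T := by
  have hp1 : 0 < p - 1 := by linarith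
  have hr : -(1 / (p - 1)) + 1 = (p - 2) / (p - 1) := by field_simp; ring
  rcases lt_trichotomy 2 p with h | rfl | h
  · refine ⟨(p - 1) / (p - 2), div_pos hp1 (by linarith), fun T hT => ?_⟩
    refine (integral_one_add_rpow_le_of_neg_one_lt ?_ ?_ (by linarith)).trans_eq ?_
    · rw [neg_lt_neg_iff, div_lt_one hp1]; linarith
    · exact neg_nonpos.2 (one_div_pos.2 hp1).le
    · rw [hr, growthRate, if_pos h]; field_simp
  · refine ⟨2, two_pos, fun T hT => ?_⟩
    norm_num [growthRate]
    exact integral_one_add_inv_le_two_mul_log hT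
  · refine ⟨(p - 1) / (2 - p), div_pos hp1 (by linarith), fun T hT => ?_⟩
    refine (integral_one_add_rpow_le_of_lt_neg_one ?_ (by linarith)).trans_eq ?_
    · rw [neg_lt_neg_iff, lt_div_iff₀ hp1]; linarith
    · rw [hr, growthRate, if_neg h.not_gt, if_neg h.ne]
      have : p - 2 ≠ 0 := by linarith
      field_simp; ring

theorem mul_rpow_mul_abs_rpow_le {a u c G r q σ β : ℝ} (ha : 0 ≤ a) (hu₀ : 0 < u) (hu₁ : u ≤ 1)
    (hc : 0 < c) (hrq : r + q = 1) (hσ : β * q ≤ σ) :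
    (a * u ^ σ) ^ r * |G * c ^ (-β) * u ^ (σ - β)| ^ q ≤ |G| ^ q * c ^ (-(β * q)) * a ^ r := by
  have hexp : σ * r + (σ - β) * q = σ - β * q := by linear_combination σ * hrq
  calc (a * u ^ σ) ^ r * |G * c ^ (-β) * u ^ (σ - β)| ^ q
      = |G| ^ q * c ^ (-(β * q)) * a ^ r * u ^ (σ - β * q) := by
        rw [abs_mul, abs_mul, abs_of_pos (rpow_pos_of_pos hc _), abs_of_pos (rpow_pos_of_pos hu₀ _),
          mul_rpow ha (rpow_nonneg hu₀.le _), mul_rpow (by positivity) (by positivity),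
          mul_rpow (abs_nonneg _) (by positivity), ← rpow_mul hc.le, ← rpow_mul hu₀.le,
          ← rpow_mul hu₀.le, ← hexp, rpow_add hu₀, neg_mul]
        ring
    _ ≤ |G| ^ q * c ^ (-(β * q)) * a ^ r :=
        mul_le_of_le_one_right (by positivity) (rpow_le_one hu₀.le hu₁ (by linarith))

theorem frac_integral_estimate_two_general (p σ α : ℝ) (k : ℕ) (hp : 1 < p)
    (hσ : ((k : ℝ) + α) * p / (p - 1) < σ) :
    ∃ C : ℝ, 0 < C ∧ ∀ T : ℝ, 2 ≤ T →
      (∫ t in (0:ℝ)..T, (((1 + t) * (1 - t / T) ^ σ) ^ (-(1 / (p - 1)))) *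
        |(Real.Gamma (σ + 1) / Real.Gamma (σ + 1 - k - α)) * T ^ (-((k : ℝ) + α)) *
          (1 - t / T) ^ (σ - ((k : ℝ) + α))| ^ (p / (p - 1)))
      ≤ C * (if 2 < p then T ^ ((p - 2) / (p - 1)) else if p = 2 then Real.log T else 1) *
          T ^ (-(((k : ℝ) + α) * p / (p - 1))) := by
  obtain ⟨K, hK, hint⟩ := exists_integral_one_add_rpow_le_growthRate hp
  set G := Real.Gamma (σ + 1) / Real.Gamma (σ + 1 - k - α)
  set β : ℝ := k + α
  set q := p / (p - 1)
  set r := -(1 / (p - 1))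
  have hrq : r + q = 1 := by
    have : p - 1 ≠ 0 := by linarith
    simp only [r, q]; field_simp; ring
  rw [mul_div_assoc] at hσ ⊢
  refine ⟨|G| ^ q * K + 1, by positivity, fun T hT => ?_⟩
  have hT₀ : 0 < T := by linarith
  have hu : ∀ t ∈ Ioo 0 T, 0 < 1 - t / T ∧ 1 - t / T ≤ 1 := fun t ht =>
    ⟨sub_pos.2 ((div_lt_one hT₀).2 ht.2), sub_le_self _ (div_nonneg ht.1.le hT₀.le)⟩
  calc _ ≤ ∫ t in (0:ℝ)..T, |G| ^ q * T ^ (-(β * q)) * (1 + t) ^ r := by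
        refine integral_mono_of_nonneg_of_le_Ioo hT₀.le (fun t ht => ?_)
          ((intervalIntegrable_one_add_rpow r T hT₀.le).const_mul _) fun t ht => ?_
        · have := ht.1; have := (hu t ht).1; positivity
        · exact mul_rpow_mul_abs_rpow_le (by linarith [ht.1]) (hu t ht).1 (hu t ht).2 hT₀ hrq
            hσ.le
    _ = |G| ^ q * T ^ (-(β * q)) * ∫ t in (0:ℝ)..T, (1 + t) ^ r := integral_const_mul _ _
    _ ≤ |G| ^ q * T ^ (-(β * q)) * (K * growthRate p T) := by gcongr; exact hint T hT
    _ ≤ (|G| ^ q * K + 1) * growthRate p T * T ^ (-(β * q)) := by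
        have := growthRate_nonneg p (by linarith : (1:ℝ) ≤ T)
        nlinarith [rpow_nonneg hT₀.le (-(β * q))]

/-- Second integral estimate of Lemma 3.3:
`∫_0^T ((1+t)w(t))^{-1/(p-1)} |D_{t|T}^{k+α} w(t)|^{p/(p-1)} dt ≲ 𝒟_p(T) T^{-(k+α)p/(p-1)}`,
where `w(t) = (1-t/T)^σ`, `𝒟_p(T) = T^{(p-2)/(p-1)}` if `p > 2`, `log T` if `p = 2`,
and `1` if `p < 2`. -/
theorem frac_integral_estimate_two (p σ α : ℝ) (k : ℕ) (hp : 1 < p)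
    (hα : α ∈ Set.Ioo (0:ℝ) 1) (hσ : ((k : ℝ) + α) * p / (p - 1) < σ) :
    ∃ C : ℝ, 0 < C ∧ ∀ T : ℝ, 2 ≤ T →
      (∫ t in (0:ℝ)..T, (((1 + t) * (1 - t / T) ^ σ) ^ (-(1 / (p - 1)))) *
        |(Real.Gamma (σ + 1) / Real.Gamma (σ + 1 - k - α)) * T ^ (-((k : ℝ) + α)) *
          (1 - t / T) ^ (σ - ((k : ℝ) + α))| ^ (p / (p - 1)))
      ≤ C * (if 2 < p then T ^ ((p - 2) / (p - 1)) else if p = 2 then Real.log T else 1) *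
          T ^ (-(((k : ℝ) + α) * p / (p - 1))) :=
  frac_integral_estimate_two_general p σ α k hp hσ
end

section
/- (Generalized Kato's type lemma.) Let p > 1, T₀ ≥ 0, and let F : [0,∞) → ℝ be continuous. Suppose there exist nonnegative constants α₀, β₀, a₀, a₁, a₂, a₃ and positive constants K₀, K̃₀ such that for all t ≥ T₀: (i) F(t) ≥ K₀ (1+t)^{-α₀} (t-T₀)^{β₀}, and (ii) F(t) ≥ K̃₀ (1+t)^{-a₀} ∫_{T₀}^t (1+η)^{a₁} ∫_{T₀}^η (1+s)^{a₂} ∫_{T₀}^s (1+τ)^{a₃} |F(τ)|^p dτ ds dη. If (β₀ - α₀)(p-1) + a₁ + a₂ + a₃ + 3 - a₀ > 0, then F cannot be defined (finite) for all t ≥ 0; i.e., for every continuous F on [0,T) satisfying (i) and (ii) on [T₀,T), necessarily T < ∞ (F blows up in finite time). -/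
open MeasureTheory intervalIntegral

namespace KatoAux

open Set

lemma integral_pow_shift {T₀ s b : ℝ} (hb : 0 ≤ b) :
    ∫ τ in T₀..s, (τ - T₀) ^ b = (s - T₀) ^ (b + 1) / (b + 1) := by
  rw [intervalIntegral.integral_comp_sub_right (fun x => x ^ b) T₀]
  rw [sub_self, integral_rpow (Or.inl (by linarith))]
  rw [Real.zero_rpow (by positivity)]
  ring

lemma est {T₀ K α' c a s : ℝ} (hT₀ : 0 ≤ T₀) (hK : 0 ≤ K) (hα' : 0 ≤ α')
    (hc : 0 ≤ c) (ha : 0 ≤ a) (hs : T₀ ≤ s) {g : ℝ → ℝ}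
    (hgi : IntervalIntegrable (fun τ => (1 + τ) ^ a * g τ) volume T₀ s)
    (hg : ∀ τ ∈ Icc T₀ s, K * (1 + τ) ^ (-α') * (τ - T₀) ^ c ≤ g τ) :
    K / (c + a + 1) * (1 + s) ^ (-α') * (s - T₀) ^ (c + a + 1) ≤
      ∫ τ in T₀..s, (1 + τ) ^ a * g τ := by
  have hs1 : (0:ℝ) < 1 + s := by linarith
  have key : ∀ τ ∈ Icc T₀ s, K * (1 + s) ^ (-α') * (τ - T₀) ^ (c + a) ≤ (1 + τ) ^ a * g τ := by
    rintro τ ⟨h1, h2⟩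
    have hτ0 : (0:ℝ) ≤ τ - T₀ := by linarith
    have hτ1 : (0:ℝ) < 1 + τ := by linarith
    have e1 : (τ - T₀) ^ a ≤ (1 + τ) ^ a :=
      Real.rpow_le_rpow hτ0 (by linarith) ha
    have e2 : (1 + s) ^ (-α') ≤ (1 + τ) ^ (-α') :=
      Real.rpow_le_rpow_of_nonpos hτ1 (by linarith) (by linarith)
    calc K * (1 + s) ^ (-α') * (τ - T₀) ^ (c + a)
        = (τ - T₀) ^ a * (K * (1 + s) ^ (-α') * (τ - T₀) ^ c) := by
          rw [Real.rpow_add_of_nonneg hτ0 hc ha]; ring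
      _ ≤ (1 + τ) ^ a * (K * (1 + τ) ^ (-α') * (τ - T₀) ^ c) := by
          apply mul_le_mul e1 _ (by positivity) (by positivity)
          exact mul_le_mul_of_nonneg_right
            (mul_le_mul_of_nonneg_left e2 hK) (by positivity)
      _ ≤ (1 + τ) ^ a * g τ :=
          mul_le_mul_of_nonneg_left (hg τ ⟨h1, h2⟩) (by positivity)
  have hlbi : IntervalIntegrable (fun τ => K * (1 + s) ^ (-α') * (τ - T₀) ^ (c + a))
      volume T₀ s := by
    have h := ((intervalIntegrable_rpow' (a := 0) (b := s - T₀)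
      (show (-1:ℝ) < c + a by linarith)).comp_sub_right T₀)
    simpa using h.const_mul (K * (1 + s) ^ (-α'))
  have hmono := intervalIntegral.integral_mono_on hs hlbi hgi key
  calc K / (c + a + 1) * (1 + s) ^ (-α') * (s - T₀) ^ (c + a + 1)
      = K * (1 + s) ^ (-α') * ((s - T₀) ^ (c + a + 1) / (c + a + 1)) := by ring
    _ = ∫ τ in T₀..s, K * (1 + s) ^ (-α') * (τ - T₀) ^ (c + a) := by
        rw [intervalIntegral.integral_const_mul, integral_pow_shift (by linarith)]
    _ ≤ _ := hmono

lemma step {p T₀ a₀ a₁ a₂ a₃ K'₀ : ℝ} (hp : 1 < p) (hT₀ : 0 ≤ T₀)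
    (ha₀ : 0 ≤ a₀) (ha₁ : 0 ≤ a₁) (ha₂ : 0 ≤ a₂) (ha₃ : 0 ≤ a₃) (hK'₀ : 0 < K'₀)
    {F : ℝ → ℝ} (hF : ContinuousOn F (Set.Ici 0))
    (hiter : ∀ t, T₀ ≤ t →
      K'₀ * (1 + t) ^ (-a₀) *
        (∫ η in T₀..t, (1 + η) ^ a₁ *
          ∫ s in T₀..η, (1 + s) ^ a₂ *
            ∫ τ in T₀..s, (1 + τ) ^ a₃ * |F τ| ^ p) ≤ F t)
    {K α β : ℝ} (hK : 0 < K) (hα : 0 ≤ α) (hβ : 0 ≤ β)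
    (hb : ∀ t, T₀ ≤ t → K * (1 + t) ^ (-α) * (t - T₀) ^ β ≤ F t) :
    ∀ t, T₀ ≤ t →
      K'₀ * K ^ p /
          ((p * β + a₃ + 1) * (p * β + a₃ + a₂ + 2) * (p * β + a₃ + a₂ + a₁ + 3)) *
        (1 + t) ^ (-(p * α + a₀)) * (t - T₀) ^ (p * β + (a₁ + a₂ + a₃ + 3)) ≤ F t := by
  intro t ht
  have hp0 : (0:ℝ) < p := by linarith
  have hIcc : Icc T₀ t ⊆ Ici (0:ℝ) := fun x hx => le_trans hT₀ hx.1
  have hg3c : ContinuousOn (fun τ => (1 + τ) ^ a₃ * |F τ| ^ p) (Icc T₀ t) := by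
    apply ContinuousOn.mul
    · exact (continuous_const.add continuous_id).continuousOn.rpow_const
        (fun x _ => Or.inr ha₃)
    · exact ((hF.mono hIcc).abs).rpow_const (fun x _ => Or.inr hp0.le)
  set G₃ : ℝ → ℝ := fun s => ∫ τ in T₀..s, (1 + τ) ^ a₃ * |F τ| ^ p with hG₃
  have hG₃c : ContinuousOn G₃ (Icc T₀ t) := by
    have := intervalIntegral.continuousOn_primitive_interval
      (a := T₀) (b := t) (μ := volume) (f := fun τ => (1 + τ) ^ a₃ * |F τ| ^ p) ?_
    · rwa [uIcc_of_le ht] at this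
    · rw [uIcc_of_le ht]; exact hg3c.integrableOn_Icc
  have bound3 : ∀ s ∈ Icc T₀ t,
      K ^ p / (p * β + a₃ + 1) * (1 + s) ^ (-(p * α)) * (s - T₀) ^ (p * β + a₃ + 1) ≤ G₃ s := by
    rintro s ⟨hs1, hs2⟩
    have h := est (T₀ := T₀) (K := K ^ p) (α' := p * α) (c := p * β) (a := a₃) (s := s)
      hT₀ (by positivity) (by positivity) (by positivity) ha₃ hs1
      (g := fun τ => |F τ| ^ p)
      ((hg3c.mono (by rw [uIcc_of_le hs1]; exact Icc_subset_Icc le_rfl hs2)).intervalIntegrable)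
      ?_
    · exact h
    · rintro τ ⟨hτ1, hτ2⟩
      have hτ0 : (0:ℝ) ≤ τ - T₀ := by linarith
      have hτp : (0:ℝ) < 1 + τ := by linarith [le_trans hT₀ hτ1]
      have hL0 : 0 ≤ K * (1 + τ) ^ (-α) * (τ - T₀) ^ β := by positivity
      have hLF : K * (1 + τ) ^ (-α) * (τ - T₀) ^ β ≤ |F τ| :=
        le_trans (hb τ hτ1) (le_abs_self _)
      have := Real.rpow_le_rpow hL0 hLF hp0.le
      calc K ^ p * (1 + τ) ^ (-(p * α)) * (τ - T₀) ^ (p * β)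
          = (K * (1 + τ) ^ (-α) * (τ - T₀) ^ β) ^ p := by
            rw [Real.mul_rpow (by positivity) (by positivity),
              Real.mul_rpow (by positivity) (by positivity),
              ← Real.rpow_mul hτp.le, ← Real.rpow_mul hτ0]
            ring_nf
        _ ≤ |F τ| ^ p := this
  have hg2c : ContinuousOn (fun s => (1 + s) ^ a₂ * G₃ s) (Icc T₀ t) := by
    apply ContinuousOn.mul
    · exact (continuous_const.add continuous_id).continuousOn.rpow_const
        (fun x _ => Or.inr ha₂)
    · exact hG₃c
  set G₂ : ℝ → ℝ := fun η => ∫ s in T₀..η, (1 + s) ^ a₂ * G₃ s with hG₂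
  have hG₂c : ContinuousOn G₂ (Icc T₀ t) := by
    have := intervalIntegral.continuousOn_primitive_interval
      (a := T₀) (b := t) (μ := volume) (f := fun s => (1 + s) ^ a₂ * G₃ s) ?_
    · rwa [uIcc_of_le ht] at this
    · rw [uIcc_of_le ht]; exact hg2c.integrableOn_Icc
  have bound2 : ∀ η ∈ Icc T₀ t,
      K ^ p / (p * β + a₃ + 1) / (p * β + a₃ + 1 + a₂ + 1) * (1 + η) ^ (-(p * α)) *
        (η - T₀) ^ (p * β + a₃ + 1 + a₂ + 1) ≤ G₂ η := by
    rintro η ⟨hη1, hη2⟩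
    have h := est (T₀ := T₀) (K := K ^ p / (p * β + a₃ + 1)) (α' := p * α)
      (c := p * β + a₃ + 1) (a := a₂) (s := η)
      hT₀ (by positivity) (by positivity) (by positivity) ha₂ hη1
      (g := G₃)
      ((hg2c.mono (by rw [uIcc_of_le hη1]; exact Icc_subset_Icc le_rfl hη2)).intervalIntegrable)
      (fun τ hτ => bound3 τ ⟨hτ.1, le_trans hτ.2 hη2⟩)
    exact h
  have hg1c : ContinuousOn (fun η => (1 + η) ^ a₁ * G₂ η) (Icc T₀ t) := by
    apply ContinuousOn.mul
    · exact (continuous_const.add continuous_id).continuousOn.rpow_const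
        (fun x _ => Or.inr ha₁)
    · exact hG₂c
  have bound1 :
      K ^ p / (p * β + a₃ + 1) / (p * β + a₃ + 1 + a₂ + 1) / (p * β + a₃ + 1 + a₂ + 1 + a₁ + 1) *
        (1 + t) ^ (-(p * α)) * (t - T₀) ^ (p * β + a₃ + 1 + a₂ + 1 + a₁ + 1) ≤
      ∫ η in T₀..t, (1 + η) ^ a₁ * G₂ η := by
    have h := est (T₀ := T₀)
      (K := K ^ p / (p * β + a₃ + 1) / (p * β + a₃ + 1 + a₂ + 1)) (α' := p * α)
      (c := p * β + a₃ + 1 + a₂ + 1) (a := a₁) (s := t)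
      hT₀ (by positivity) (by positivity) (by positivity) ha₁ ht
      (g := G₂)
      ((hg1c.mono (by rw [uIcc_of_le ht])).intervalIntegrable)
      bound2
    exact h
  have h1t : (0:ℝ) < 1 + t := by linarith
  have hpβ : (0:ℝ) ≤ p * β := mul_nonneg hp0.le hβ
  have hd₃ : (0:ℝ) < p * β + a₃ + 1 := by linarith
  have hd₂ : (0:ℝ) < p * β + a₃ + 1 + a₂ + 1 := by linarith
  have hd₁ : (0:ℝ) < p * β + a₃ + 1 + a₂ + 1 + a₁ + 1 := by linarith
  have e1 : (1 + t) ^ (-(p * α + a₀)) = (1 + t) ^ (-a₀) * (1 + t) ^ (-(p * α)) := by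
    rw [← Real.rpow_add h1t]; ring_nf
  have e2 : (t - T₀) ^ (p * β + (a₁ + a₂ + a₃ + 3)) =
      (t - T₀) ^ (p * β + a₃ + 1 + a₂ + 1 + a₁ + 1) := by
    rw [show p * β + (a₁ + a₂ + a₃ + 3) = p * β + a₃ + 1 + a₂ + 1 + a₁ + 1 by ring]
  have e3 : K'₀ * K ^ p /
        ((p * β + a₃ + 1) * (p * β + a₃ + a₂ + 2) * (p * β + a₃ + a₂ + a₁ + 3)) =
      K'₀ * (K ^ p / (p * β + a₃ + 1) / (p * β + a₃ + 1 + a₂ + 1) /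
        (p * β + a₃ + 1 + a₂ + 1 + a₁ + 1)) := by
    rw [show p * β + a₃ + a₂ + 2 = p * β + a₃ + 1 + a₂ + 1 by ring,
      show p * β + a₃ + a₂ + a₁ + 3 = p * β + a₃ + 1 + a₂ + 1 + a₁ + 1 by ring]
    field_simp
  calc K'₀ * K ^ p /
          ((p * β + a₃ + 1) * (p * β + a₃ + a₂ + 2) * (p * β + a₃ + a₂ + a₁ + 3)) *
        (1 + t) ^ (-(p * α + a₀)) * (t - T₀) ^ (p * β + (a₁ + a₂ + a₃ + 3))
      = K'₀ * (1 + t) ^ (-a₀) *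
          (K ^ p / (p * β + a₃ + 1) / (p * β + a₃ + 1 + a₂ + 1) /
              (p * β + a₃ + 1 + a₂ + 1 + a₁ + 1) *
            (1 + t) ^ (-(p * α)) * (t - T₀) ^ (p * β + a₃ + 1 + a₂ + 1 + a₁ + 1)) := by
        rw [e1, e2, e3]; ring
    _ ≤ K'₀ * (1 + t) ^ (-a₀) * ∫ η in T₀..t, (1 + η) ^ a₁ * G₂ η :=
        mul_le_mul_of_nonneg_left bound1 (by positivity)
    _ ≤ F t := hiter t ht

/-- recursion lower bound for the log of the constants -/
lemma geom_rec {p q c₁ c₂ C : ℝ} (hp : 1 < p) (hq : 1 < q) (hq2 : q ^ 2 = p)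
    (hC : ∀ j : ℕ, c₁ + c₂ * ((j : ℝ) + 1) ≤ C * (q - 1) * q ^ (j + 1))
    (x : ℕ → ℝ) (hrec : ∀ j : ℕ, p * x j - c₁ - c₂ * ((j : ℝ) + 1) ≤ x (j + 1)) :
    ∀ j : ℕ, p ^ j * x 0 - C * (p ^ j - q ^ j) ≤ x j := by
  intro j
  induction j with
  | zero => simp
  | succ j IH =>
    have hp0 : (0:ℝ) < p := by linarith
    have IH2 : p ^ (j+1) * x 0 - C * (p ^ (j+1) - q * q ^ (j+1)) ≤ p * x j := by
      have h := mul_le_mul_of_nonneg_left IH hp0.le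
      calc p ^ (j+1) * x 0 - C * (p ^ (j+1) - q * q ^ (j+1))
          = p * (p ^ j * x 0 - C * (p ^ j - q ^ j)) := by rw [← hq2]; ring
        _ ≤ p * x j := h
    have h1 := hrec j
    have h2 := hC j
    linarith [h1, h2, IH2]

end KatoAux

namespace KatoAux

/-- the sequence of exponents of `(1+t)` -/
noncomputable def alphaSeq (p a₀ α₀ : ℝ) : ℕ → ℝ
  | 0 => α₀
  | (j+1) => p * alphaSeq p a₀ α₀ j + a₀

/-- the sequence of exponents of `(t-T₀)` -/
noncomputable def betaSeq (p S β₀ : ℝ) : ℕ → ℝ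
  | 0 => β₀
  | (j+1) => p * betaSeq p S β₀ j + S

/-- the sequence of multiplicative constants -/
noncomputable def kSeq (p a₁ a₂ a₃ K'₀ β₀ K₀ : ℝ) : ℕ → ℝ
  | 0 => K₀
  | (j+1) =>
    K'₀ * (kSeq p a₁ a₂ a₃ K'₀ β₀ K₀ j) ^ p /
      ((p * betaSeq p (a₁ + a₂ + a₃ + 3) β₀ j + a₃ + 1) *
        (p * betaSeq p (a₁ + a₂ + a₃ + 3) β₀ j + a₃ + a₂ + 2) *
        (p * betaSeq p (a₁ + a₂ + a₃ + 3) β₀ j + a₃ + a₂ + a₁ + 3))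

end KatoAux

open KatoAux

set_option maxHeartbeats 2000000 in
/-- Generalized Kato's type lemma: no continuous function `F` on `[0,∞)` can satisfy both
the lower bound (i) and the nonlinear integral inequality (ii) for all `t ≥ T₀` when
`(β₀-α₀)(p-1) + a₁+a₂+a₃+3 - a₀ > 0`; i.e. such an `F` must blow up in finite time. -/
theorem generalized_kato_lemma (p T₀ α₀ β₀ a₀ a₁ a₂ a₃ K₀ K'₀ : ℝ)
    (hp : 1 < p) (hT₀ : 0 ≤ T₀)
    (hα₀ : 0 ≤ α₀) (hβ₀ : 0 ≤ β₀) (ha₀ : 0 ≤ a₀) (ha₁ : 0 ≤ a₁) (ha₂ : 0 ≤ a₂) (ha₃ : 0 ≤ a₃)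
    (hK₀ : 0 < K₀) (hK'₀ : 0 < K'₀)
    (hcond : (β₀ - α₀) * (p - 1) + a₁ + a₂ + a₃ + 3 - a₀ > 0)
    (F : ℝ → ℝ) (hF : ContinuousOn F (Set.Ici 0))
    (hlow : ∀ t, T₀ ≤ t → K₀ * (1 + t) ^ (-α₀) * (t - T₀) ^ β₀ ≤ F t)
    (hiter : ∀ t, T₀ ≤ t →
      K'₀ * (1 + t) ^ (-a₀) *
        (∫ η in T₀..t, (1 + η) ^ a₁ *
          ∫ s in T₀..η, (1 + s) ^ a₂ *
            ∫ τ in T₀..s, (1 + τ) ^ a₃ * |F τ| ^ p) ≤ F t) :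
    False := by
  have hp0 : (0:ℝ) < p := by linarith
  have hp1 : (0:ℝ) < p - 1 := by linarith
  set S : ℝ := a₁ + a₂ + a₃ + 3 with hS
  have hS0 : (0:ℝ) < S := by rw [hS]; linarith
  set αs : ℕ → ℝ := alphaSeq p a₀ α₀ with hαs
  set βs : ℕ → ℝ := betaSeq p S β₀ with hβs
  set Ks : ℕ → ℝ := kSeq p a₁ a₂ a₃ K'₀ β₀ K₀ with hKs
  have hα0 : αs 0 = α₀ := rfl
  have hαsucc : ∀ j, αs (j+1) = p * αs j + a₀ := fun j => rfl
  have hβ0 : βs 0 = β₀ := rfl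
  have hβsucc : ∀ j, βs (j+1) = p * βs j + S := fun j => rfl
  have hK0 : Ks 0 = K₀ := rfl
  have hKsucc : ∀ j, Ks (j+1) = K'₀ * (Ks j) ^ p /
      ((p * βs j + a₃ + 1) * (p * βs j + a₃ + a₂ + 2) *
        (p * βs j + a₃ + a₂ + a₁ + 3)) := fun j => rfl
  -- basic positivity of the sequences
  have hαn : ∀ j, 0 ≤ αs j := by
    intro j; induction j with
    | zero => exact hα₀
    | succ j IH => rw [hαsucc]; positivity
  have hβn : ∀ j, 0 ≤ βs j := by
    intro j; induction j with
    | zero => exact hβ₀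
    | succ j IH => rw [hβsucc]; have := hS0.le; positivity
  have hDpos : ∀ j, (0:ℝ) <
      (p * βs j + a₃ + 1) * (p * βs j + a₃ + a₂ + 2) * (p * βs j + a₃ + a₂ + a₁ + 3) := by
    intro j
    have h := mul_nonneg hp0.le (hβn j)
    have h1 : (0:ℝ) < p * βs j + a₃ + 1 := by linarith
    have h2 : (0:ℝ) < p * βs j + a₃ + a₂ + 2 := by linarith
    have h3 : (0:ℝ) < p * βs j + a₃ + a₂ + a₁ + 3 := by linarith
    positivity
  have hKp : ∀ j, 0 < Ks j := by
    intro j; induction j with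
    | zero => exact hK₀
    | succ j IH =>
      rw [hKsucc]
      exact div_pos (by positivity) (hDpos j)
  -- the iterated lower bounds
  have hbound : ∀ j, ∀ t, T₀ ≤ t → Ks j * (1 + t) ^ (-(αs j)) * (t - T₀) ^ (βs j) ≤ F t := by
    intro j; induction j with
    | zero => exact hlow
    | succ j IH =>
      have h := step hp hT₀ ha₀ ha₁ ha₂ ha₃ hK'₀ hF hiter (hKp j) (hαn j) (hβn j) IH
      intro t ht
      rw [hKsucc, hαsucc, hβsucc, hS]
      exact h t ht
  -- explicit formulas
  have hα_eq : ∀ j, αs j = p ^ j * (α₀ + a₀ / (p - 1)) - a₀ / (p - 1) := by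
    intro j; induction j with
    | zero => rw [hα0]; simp
    | succ j IH =>
      rw [hαsucc, IH]; field_simp; ring
  have hβ_eq : ∀ j, βs j = p ^ j * (β₀ + S / (p - 1)) - S / (p - 1) := by
    intro j; induction j with
    | zero => rw [hβ0]; simp
    | succ j IH =>
      rw [hβsucc, IH]; field_simp; ring
  set A : ℝ := α₀ + a₀ / (p - 1) with hA
  set B : ℝ := β₀ + S / (p - 1) with hB
  have hApos : 0 ≤ A := by
    have : 0 ≤ a₀ / (p - 1) := div_nonneg ha₀ hp1.le
    rw [hA]; linarith
  have hBpos : 0 < B := by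
    have : 0 < S / (p - 1) := div_pos hS0 hp1
    rw [hB]; linarith
  have hBA : 0 < B - A := by
    have he : B - A = ((β₀ - α₀) * (p - 1) + a₁ + a₂ + a₃ + 3 - a₀) / (p - 1) := by
      rw [hA, hB, hS]; field_simp; ring
    rw [he]
    exact div_pos hcond hp1
  -- the log recursion
  set c₁ : ℝ := max 0 (3 * Real.log B - Real.log K'₀) with hc₁
  set c₂ : ℝ := 3 * Real.log p with hc₂
  have hc₁0 : 0 ≤ c₁ := le_max_left _ _
  have hc₂0 : 0 ≤ c₂ := by
    rw [hc₂]
    have := Real.log_nonneg hp.le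
    linarith
  have hrec : ∀ j : ℕ, p * Real.log (Ks j) - c₁ - c₂ * ((j : ℝ) + 1) ≤ Real.log (Ks (j+1)) := by
    intro j
    have hd := hDpos j
    have hβj := mul_nonneg hp0.le (hβn j)
    have h1 : (0:ℝ) < p * βs j + a₃ + 1 := by linarith
    have h2 : (0:ℝ) < p * βs j + a₃ + a₂ + 2 := by linarith
    have h3 : (0:ℝ) < p * βs j + a₃ + a₂ + a₁ + 3 := by linarith
    have heq : Real.log (Ks (j+1)) =
        Real.log K'₀ + p * Real.log (Ks j) -
          (Real.log (p * βs j + a₃ + 1) + Real.log (p * βs j + a₃ + a₂ + 2) +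
            Real.log (p * βs j + a₃ + a₂ + a₁ + 3)) := by
      have hKj := hKp j
      rw [hKsucc]
      rw [Real.log_div (mul_pos hK'₀ (Real.rpow_pos_of_pos hKj p)).ne' (ne_of_gt hd),
        Real.log_mul (ne_of_gt hK'₀) (Real.rpow_pos_of_pos hKj p).ne',
        Real.log_rpow hKj,
        Real.log_mul (mul_pos h1 h2).ne' (ne_of_gt h3),
        Real.log_mul (ne_of_gt h1) (ne_of_gt h2)]
    -- bound each factor
    have hβup : βs (j+1) ≤ p ^ (j+1) * B := by
      rw [hβ_eq (j+1)]
      have h0 : 0 ≤ S / (p-1) := div_nonneg hS0.le hp1.le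
      rw [hB]
      have hpj := (pow_pos hp0 (j+1)).le
      linarith
    have hfac : ∀ d : ℝ, 0 < d → d ≤ p * βs j + S →
        Real.log d ≤ ((j:ℝ) + 1) * Real.log p + Real.log B := by
      intro d hd0 hdle
      have hβs : p * βs j + S = βs (j+1) := (hβsucc j).symm
      have hle : d ≤ p ^ (j+1) * B := by rw [hβs] at hdle; linarith [hβup]
      calc Real.log d ≤ Real.log (p ^ (j+1) * B) := Real.log_le_log hd0 hle
        _ = ((j:ℝ) + 1) * Real.log p + Real.log B := by
            rw [Real.log_mul (by positivity) (ne_of_gt hBpos), Real.log_pow]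
            push_cast; ring
    have hf1 := hfac _ h1 (by rw [hS]; linarith)
    have hf2 := hfac _ h2 (by rw [hS]; linarith)
    have hf3 := hfac _ h3 (by rw [hS]; linarith)
    have hcc : Real.log K'₀ - 3 * Real.log B ≥ -c₁ := by
      have := le_max_right 0 (3 * Real.log B - Real.log K'₀)
      rw [hc₁]; linarith
    rw [heq]
    rw [hc₂]
    linarith
  -- solve the recursion
  set q : ℝ := Real.sqrt p with hq
  have hq1 : 1 < q := by
    rw [hq]
    rw [show (1:ℝ) = Real.sqrt 1 by simp]
    exact Real.sqrt_lt_sqrt (by norm_num) hp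
  have hq2 : q ^ 2 = p := Real.sq_sqrt hp0.le
  set C : ℝ := (c₁ + c₂ / (q - 1)) / (q - 1) with hC
  have hq10 : 0 < q - 1 := by linarith
  have hC0 : 0 ≤ C := by rw [hC]; positivity
  have hCgood : ∀ j : ℕ, c₁ + c₂ * ((j : ℝ) + 1) ≤ C * (q - 1) * q ^ (j + 1) := by
    intro j
    have hqj : (1:ℝ) ≤ q ^ (j+1) := one_le_pow₀ hq1.le
    have hbern : ((j:ℝ) + 1) * (q - 1) ≤ q ^ (j+1) := by
      have h := one_add_mul_le_pow (a := q - 1) (by linarith) (j+1)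
      have : (1 + (q-1)) ^ (j+1) = q ^ (j+1) := by norm_num
      rw [this] at h
      push_cast at h ⊢
      linarith
    have hCq : C * (q - 1) = c₁ + c₂ / (q - 1) := by
      rw [hC]; field_simp
    rw [hCq]
    have e1 : c₁ ≤ c₁ * q ^ (j+1) := le_mul_of_one_le_right hc₁0 hqj
    have e2 : c₂ * ((j:ℝ)+1) ≤ c₂ / (q-1) * q ^ (j+1) := by
      have h := mul_le_mul_of_nonneg_left hbern (div_nonneg hc₂0 hq10.le)
      calc c₂ * ((j:ℝ)+1) = c₂ / (q-1) * ((((j:ℝ)+1)) * (q-1)) := by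
            field_simp
        _ ≤ c₂ / (q-1) * q ^ (j+1) := h
    calc c₁ + c₂ * ((j:ℝ)+1) ≤ c₁ * q ^ (j+1) + c₂ / (q-1) * q ^ (j+1) := by linarith
      _ = (c₁ + c₂ / (q-1)) * q ^ (j+1) := by ring
  have hxlb : ∀ j : ℕ, p ^ j * Real.log (Ks 0) - C * (p ^ j - q ^ j) ≤ Real.log (Ks j) :=
    geom_rec hp hq1 hq2 hCgood (fun j => Real.log (Ks j)) hrec
  set C' : ℝ := C + |Real.log K₀| with hC'
  have hC'0 : 0 ≤ C' := by rw [hC']; positivity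
  have hxlb' : ∀ j : ℕ, -C' * p ^ j ≤ Real.log (Ks j) := by
    intro j
    have h := hxlb j
    have hq0 : (0:ℝ) ≤ q ^ j := by positivity
    have hpj : (0:ℝ) < p ^ j := by positivity
    rw [hK0] at h
    have h2 : 0 ≤ p ^ j * (Real.log K₀ + |Real.log K₀|) :=
      mul_nonneg hpj.le (by linarith [neg_abs_le (Real.log K₀)])
    have h3 : 0 ≤ C * q ^ j := mul_nonneg hC0 hq0
    rw [hC']
    nlinarith [h, h2, h3]
  -- choose the blow-up point
  set t : ℝ := T₀ + (1 + T₀) + Real.exp ((C' + 1 + A * Real.log 2) / (B - A)) with htdef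
  have hexp0 : 0 < Real.exp ((C' + 1 + A * Real.log 2) / (B - A)) := Real.exp_pos _
  have ht : T₀ ≤ t := by rw [htdef]; linarith
  have htT1 : 1 ≤ t - T₀ := by rw [htdef]; linarith
  have h1t : (0:ℝ) < 1 + t := by linarith
  have htT0 : (0:ℝ) < t - T₀ := by linarith
  have hlog2 : 1 + t ≤ 2 * (t - T₀) := by rw [htdef]; linarith
  have hlogt : (C' + 1 + A * Real.log 2) / (B - A) ≤ Real.log (t - T₀) := by
    rw [Real.le_log_iff_exp_le htT0, htdef]
    linarith
  set L1 : ℝ := Real.log (1 + t) with hL1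
  set L2 : ℝ := Real.log (t - T₀) with hL2
  have hL2nn : 0 ≤ L2 := by rw [hL2]; exact Real.log_nonneg htT1
  have hL1le : L1 ≤ Real.log 2 + L2 := by
    rw [hL1, hL2]
    calc Real.log (1 + t) ≤ Real.log (2 * (t - T₀)) := Real.log_le_log h1t hlog2
      _ = Real.log 2 + Real.log (t - T₀) := Real.log_mul (by norm_num) (ne_of_gt htT0)
  have heps : B * L2 - A * L1 - C' ≥ 1 := by
    have h1 : C' + 1 + A * Real.log 2 ≤ L2 * (B - A) := (div_le_iff₀ hBA).mp hlogt
    have h4 := mul_le_mul_of_nonneg_left hL1le hApos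
    linarith only [h1, h4]
  -- the value F t is finite but exceeded
  have hFt : 0 < F t := lt_of_lt_of_le (by positivity) (hlow t ht)
  -- for every j, exp (p^j + c₈) ≤ F t
  set c₈ : ℝ := a₀ / (p - 1) * L1 - S / (p - 1) * L2 with hc₈
  have hkey : ∀ j : ℕ, (p:ℝ) ^ j ≤ Real.log (F t) - c₈ := by
    intro j
    have hb := hbound j t ht
    have hrw : Ks j * (1 + t) ^ (-(αs j)) * (t - T₀) ^ (βs j) =
        Real.exp (Real.log (Ks j) - αs j * L1 + βs j * L2) := by
      conv_lhs => rw [Real.rpow_def_of_pos h1t, Real.rpow_def_of_pos htT0,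
        ← Real.exp_log (hKp j)]
      rw [← Real.exp_add, ← Real.exp_add, hL1, hL2]
      congr 1
      ring
    rw [hrw] at hb
    have hexple : Real.exp ((p:ℝ) ^ j + c₈) ≤ F t := by
      refine le_trans (Real.exp_le_exp.mpr ?_) hb
      have hx := hxlb' j
      have hpj : (0:ℝ) ≤ p ^ j := by positivity
      rw [hc₈, hα_eq j, hβ_eq j]
      have hint := mul_le_mul_of_nonneg_left heps hpj
      clear_value S A B C' L1 L2 c₈
      linarith only [hx, hint]
    have := (Real.le_log_iff_exp_le hFt).mpr hexple
    linarith
  obtain ⟨j, hj⟩ := pow_unbounded_of_one_lt (Real.log (F t) - c₈) hp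
  exact absurd (hkey j) (not_le.mpr hj)
end
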